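/- Let M : [0,1] → Sp(2N) be a C¹ path of symplectic matrices and let t ↦ v(t) ∈ ker(M(t) − I) be a C¹ path of vectors in the kernel. Then the crossing form vanishes on these vectors: Γ(M,t)(v(t)) := ⟨v(t), −J₀ Ṁ(t) M(t)⁻¹ v(t)⟩ = 0 for all t. -/

import Mathlib

open Matrix

abbrev V (n : ℕ) := Fin n ⊕ Fin n

/-- The standard complex structure `J₀ = [[0,-I],[I,0]]` on `ℝ^{2n}`. -/
noncomputable def J0 (n : ℕ) : Matrix (V n) (V n) ℝ :=
  Matrix.fromBlocks 0 (-1) 1 0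

/-- The standard complex structure `J̃₀` on `ℝ^{2n} ⊕ ℝ^m ⊕ ℝ^m`. -/
noncomputable def Jt0 (n m : ℕ) : Matrix (V n ⊕ V m) (V n ⊕ V m) ℝ :=
  Matrix.fromBlocks (J0 n) 0 0 (J0 m)

/-- `Ψ` is symplectic: `Ψᵀ J₀ Ψ = J₀`. -/
def IsSymplectic {n : ℕ} (Ψ : Matrix (V n) (V n) ℝ) : Prop :=
  Ψᵀ * J0 n * Ψ = J0 n

/-- The block matrix `M(Ψ,X,E) = [[Ψ, ΨX, 0],[0, I, 0],[XᵀJ₀, E + ½XᵀJ₀X, I]]`. -/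
noncomputable def Mblk {n m : ℕ} (Ψ : Matrix (V n) (V n) ℝ) (X : Matrix (V n) (Fin m) ℝ)
    (E : Matrix (Fin m) (Fin m) ℝ) : Matrix (V n ⊕ V m) (V n ⊕ V m) ℝ :=
  Matrix.fromBlocks Ψ (Matrix.fromCols (Ψ * X) 0)
    (Matrix.fromRows 0 (Xᵀ * J0 n))
    (Matrix.fromBlocks 1 0 (E + (1 / 2 : ℝ) • (Xᵀ * J0 n * X)) 1)

attribute [local instance] Matrix.normedAddCommGroup Matrix.normedSpace

/-! Differentiating `M v = v` gives `Ṁ v = v̇ - M v̇`, and `M⁻¹ v = v`. Hence the crossing form is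
`⟨v, J₀ M v̇⟩ - ⟨v, J₀ v̇⟩ = ⟨M v, J₀ M v̇⟩ - ⟨v, J₀ v̇⟩`, which vanishes since `Mᵀ J₀ M = J₀`. -/

theorem HasDerivAt.matrix_mulVec {𝕜 : Type*} [NontriviallyNormedField 𝕜] {m n : Type*}
    [Fintype m] [Fintype n] {A : 𝕜 → Matrix m n 𝕜} {A' : Matrix m n 𝕜} {x : 𝕜 → n → 𝕜}
    {x' : n → 𝕜} {t : 𝕜} (hA : HasDerivAt A A' t) (hx : HasDerivAt x x' t) :
    HasDerivAt (fun s => A s *ᵥ x s) (A' *ᵥ x t + A t *ᵥ x') t := by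
  rw [hasDerivAt_pi]
  intro i
  have hAij : ∀ j, HasDerivAt (fun s => A s i j) (A' i j) t := fun j =>
    hasDerivAt_pi.1 (hasDerivAt_pi.1 hA i) j
  have hxj : ∀ j, HasDerivAt (fun s => x s j) (x' j) t := hasDerivAt_pi.1 hx
  simpa only [mulVec, dotProduct, Pi.add_apply, Finset.sum_add_distrib] using
    HasDerivAt.fun_sum fun j _ => (hAij j).fun_mul (hxj j)

theorem mulVec_deriv_eq_of_forall_mulVec_eq {𝕜 : Type*} [NontriviallyNormedField 𝕜]
    {n : Type*} [Fintype n] {A : 𝕜 → Matrix n n 𝕜} {A' : Matrix n n 𝕜} {x : 𝕜 → n → 𝕜}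
    {x' : n → 𝕜} {t : 𝕜} (hA : HasDerivAt A A' t) (hx : HasDerivAt x x' t)
    (hfix : ∀ s, A s *ᵥ x s = x s) :
    A' *ᵥ x t = x' - A t *ᵥ x' := by
  have hderiv := hA.matrix_mulVec hx
  simp only [hfix] at hderiv
  exact eq_sub_of_add_eq (hderiv.unique hx)

theorem J0_eq_J (n : ℕ) : J0 n = Matrix.J (Fin n) ℝ := rfl

theorem isSymplectic_iff_mem_symplecticGroup {n : ℕ} {M : Matrix (V n) (V n) ℝ} :
    IsSymplectic M ↔ M ∈ symplecticGroup (Fin n) ℝ := by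
  rw [IsSymplectic, J0_eq_J, SymplecticGroup.mem_iff']

theorem IsSymplectic.isUnit_det {n : ℕ} {M : Matrix (V n) (V n) ℝ} (hM : IsSymplectic M) :
    IsUnit M.det :=
  SymplecticGroup.symplectic_det (isSymplectic_iff_mem_symplecticGroup.1 hM)

theorem IsSymplectic.mulVec_dotProduct_J0_mulVec {n : ℕ} {M : Matrix (V n) (V n) ℝ}
    (hM : IsSymplectic M) (x y : V n → ℝ) :
    (M *ᵥ x) ⬝ᵥ J0 n *ᵥ (M *ᵥ y) = x ⬝ᵥ J0 n *ᵥ y := by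
  rw [dotProduct_mulVec, vecMul_mulVec, ← dotProduct_mulVec, mulVec_mulVec, hM]

/-- If `M(t)` is a `C¹` path of symplectic matrices and `v(t)` a `C¹` path of
vectors with `v(t) ∈ ker(M(t) − I)`, then the crossing form vanishes on them:
`⟨v(t), −J₀ Ṁ(t) M(t)⁻¹ v(t)⟩ = 0`. -/
theorem stmt9 {N : ℕ} (M M' : ℝ → Matrix (V N) (V N) ℝ)
    (v v' : ℝ → V N → ℝ)
    (hM : ∀ t, HasDerivAt M (M' t) t)
    (hsympl : ∀ t, IsSymplectic (M t))
    (hv : ∀ t, HasDerivAt v (v' t) t)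
    (hker : ∀ t, (M t).mulVec (v t) = v t) :
    ∀ t : ℝ, v t ⬝ᵥ (-(J0 N * M' t * (M t)⁻¹)).mulVec (v t) = 0 := by
  intro t
  have hinv : (M t)⁻¹ *ᵥ v t = v t := by
    have := (M t).invertibleOfIsUnitDet (hsympl t).isUnit_det
    exact inv_mulVec_eq_vec (hker t).symm
  have hderiv := mulVec_deriv_eq_of_forall_mulVec_eq (hM t) (hv t) hker
  have hinvariant : v t ⬝ᵥ J0 N *ᵥ (M t *ᵥ v' t) = v t ⬝ᵥ J0 N *ᵥ v' t := by
    conv_lhs => rw [← hker t]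
    exact (hsympl t).mulVec_dotProduct_J0_mulVec _ _
  rw [neg_mulVec, dotProduct_neg, ← mulVec_mulVec, hinv, ← mulVec_mulVec, hderiv, mulVec_sub,
    dotProduct_sub, hinvariant, sub_self, neg_zero]
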